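/- arXiv:1509.07426 — 9 statements merged into one kernel-verified Lean document; each statement's English description precedes it below -/
import Mathlib

section
/- Let A₁, A₂ be real m×n matrices, let B₁, B₂ be real m×m symmetric positive definite matrices, and let λ ∈ [0,1]. Then λ·A₁ᵀB₁⁻¹A₁ + (1−λ)·A₂ᵀB₂⁻¹A₂ − (λA₁+(1−λ)A₂)ᵀ(λB₁+(1−λ)B₂)⁻¹(λA₁+(1−λ)A₂) is positive semidefinite; that is, the matrix fractional function (A,B) ↦ AᵀB⁻¹A is jointly matrix convex in A and in positive definite B. -/
/-!
For `B ≻ 0`, the block matrix `[[B, A], [Aᴴ, X]]` is positive semidefinite iff its Schur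
complement `X - Aᴴ B⁻¹ A` is. Hence `[[Bᵢ, Aᵢ], [Aᵢᴴ, Aᵢᴴ Bᵢ⁻¹ Aᵢ]] ⪰ 0`, and so is their convex
combination, whose upper-left block `λ B₁ + (1 - λ) B₂` is again positive definite; the Schur
complement of that combination is exactly the matrix of the claim.
-/

open Matrix
open scoped ComplexOrder

namespace Matrix

variable {m n 𝕜 : Type*} [RCLike 𝕜]

theorem convex_setOf_posSemidef : Convex ℝ {M : Matrix n n 𝕜 | M.PosSemidef} :=
  fun _ hM _ hN _ _ ha hb _ => (hM.smul ha).add (hN.smul hb)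

theorem convex_setOf_posDef : Convex ℝ {M : Matrix n n 𝕜 | M.PosDef} := by
  intro M hM N hN a b ha hb hab
  rcases ha.lt_or_eq with ha | rfl
  · exact (hM.smul ha).add_posSemidef (hN.posSemidef.smul hb)
  · rw [zero_add] at hab
    subst hab
    simpa using hN

theorem PosDef.posSemidef_fromBlocks_inv [Fintype m] [DecidableEq m] [Finite n]
    {B : Matrix m m 𝕜} (hB : B.PosDef) (A : Matrix m n 𝕜) :
    (fromBlocks B A Aᴴ (Aᴴ * B⁻¹ * A)).PosSemidef := by
  have := hB.isUnit.invertible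
  rw [hB.fromBlocks₁₁, sub_self]
  exact .zero

end Matrix

/-- The matrix fractional function (A, B) ↦ AᵀB⁻¹A is jointly matrix convex
in A and positive definite B. -/
theorem matrix_fractional_jointly_convex (m n : ℕ)
    (A₁ A₂ : Matrix (Fin m) (Fin n) ℝ) (B₁ B₂ : Matrix (Fin m) (Fin m) ℝ)
    (hB₁ : B₁.PosDef) (hB₂ : B₂.PosDef) (l : ℝ) (hl0 : 0 ≤ l) (hl1 : l ≤ 1) :
    (l • (A₁ᵀ * B₁⁻¹ * A₁) + (1 - l) • (A₂ᵀ * B₂⁻¹ * A₂) -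
      (l • A₁ + (1 - l) • A₂)ᵀ * (l • B₁ + (1 - l) • B₂)⁻¹ *
        (l • A₁ + (1 - l) • A₂)).PosSemidef := by
  have hl : 0 ≤ 1 - l := sub_nonneg.2 hl1
  have hB : (l • B₁ + (1 - l) • B₂).PosDef :=
    convex_setOf_posDef hB₁ hB₂ hl0 hl (add_sub_cancel l 1)
  have hblocks : (fromBlocks (l • B₁ + (1 - l) • B₂) (l • A₁ + (1 - l) • A₂)
      (l • A₁ + (1 - l) • A₂)ᴴ
      (l • (A₁ᵀ * B₁⁻¹ * A₁) + (1 - l) • (A₂ᵀ * B₂⁻¹ * A₂))).PosSemidef := by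
    simpa [fromBlocks_smul, fromBlocks_add] using
      convex_setOf_posSemidef (hB₁.posSemidef_fromBlocks_inv A₁)
        (hB₂.posSemidef_fromBlocks_inv A₂) hl0 hl (add_sub_cancel l 1)
  have := hB.isUnit.invertible
  rwa [hB.fromBlocks₁₁, conjTranspose_eq_transpose_of_trivial] at hblocks
end

section
/- Let A be a real n×n symmetric positive definite matrix and let B be a real n×n symmetric positive semidefinite matrix all of whose diagonal entries are strictly positive. Then the Hadamard (entrywise) product A ⊙ B is positive definite. -/
/-!
Write the positive semidefinite factor as a Gram matrix `B = Cᴴ * C`. Then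
`x* (A ⊙ B) x = ∑ₖ yₖ* A yₖ` with `yₖ i = C k i * x i`, a sum of nonnegative terms. If
`x i ≠ 0`, positivity of `B i i = ∑ₖ |C k i|²` gives a row `k` with `C k i ≠ 0`, so `yₖ ≠ 0`
and that term is strictly positive.
-/

open Matrix

namespace Matrix

open scoped ComplexOrder

variable {ι κ : Type*} [Fintype κ]

theorem exists_ne_zero_of_conjTranspose_mul_self_apply_ne_zero {R : Type*}
    [NonUnitalNonAssocSemiring R] [StarAddMonoid R] {C : Matrix κ ι R} {i : ι}
    (h : (Cᴴ * C) i i ≠ 0) : ∃ k, C k i ≠ 0 := by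
  contrapose! h
  simp [mul_apply, h]

variable [Fintype ι]

theorem star_dotProduct_hadamard_conjTranspose_mul_self_mulVec {R : Type*} [CommSemiring R]
    [StarRing R] (A : Matrix ι ι R) (C : Matrix κ ι R) (x : ι → R) :
    star x ⬝ᵥ (A ⊙ (Cᴴ * C)) *ᵥ x =
      ∑ k, star (fun i ↦ C k i * x i) ⬝ᵥ A *ᵥ fun i ↦ C k i * x i := by
  simp only [dotProduct, mulVec, hadamard_apply, mul_apply, conjTranspose_apply, Pi.star_apply,
    star_mul', Finset.mul_sum, Finset.sum_mul]
  refine (Finset.sum_congr rfl fun i _ ↦ Finset.sum_comm).trans (Finset.sum_comm.trans ?_)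
  exact Finset.sum_congr rfl fun k _ ↦ Finset.sum_congr rfl fun i _ ↦
    Finset.sum_congr rfl fun j _ ↦ by ring

variable {𝕜 : Type*} [RCLike 𝕜]

theorem PosSemidef.exists_eq_conjTranspose_mul_self {B : Matrix ι ι 𝕜} (hB : B.PosSemidef) :
    ∃ C : Matrix ι ι 𝕜, B = Cᴴ * C := by
  classical
  open scoped MatrixOrder in
  exact CStarAlgebra.nonneg_iff_eq_star_mul_self.mp hB.nonneg

theorem PosDef.hadamard_conjTranspose_mul_self {A : Matrix ι ι 𝕜} (hA : A.PosDef)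
    {C : Matrix κ ι 𝕜} (hC : ∀ i, ∃ k, C k i ≠ 0) : (A ⊙ (Cᴴ * C)).PosDef := by
  refine .of_dotProduct_mulVec_pos
    (hA.isHermitian.hadamard (isHermitian_conjTranspose_mul_self C)) fun x hx ↦ ?_
  obtain ⟨i, hxi⟩ := Function.ne_iff.mp hx
  obtain ⟨k, hCki⟩ := hC i
  have hy : (fun j ↦ C k j * x j) ≠ 0 := fun h ↦ mul_ne_zero hCki hxi (congrFun h i)
  rw [star_dotProduct_hadamard_conjTranspose_mul_self_mulVec]
  exact Finset.sum_pos' (fun k _ ↦ hA.posSemidef.dotProduct_mulVec_nonneg _)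
    ⟨k, Finset.mem_univ k, hA.dotProduct_mulVec_pos hy⟩

end Matrix

/-- Schur: the Hadamard product of a positive definite matrix with a
positive semidefinite matrix having strictly positive diagonal entries is positive definite. -/
theorem hadamard_posDef_of_posDef_posSemidef (n : ℕ)
    (A B : Matrix (Fin n) (Fin n) ℝ) (hA : A.PosDef) (hB : B.PosSemidef)
    (hBdiag : ∀ i, 0 < B i i) :
    (A ⊙ B).PosDef := by
  obtain ⟨C, rfl⟩ := hB.exists_eq_conjTranspose_mul_self
  exact hA.hadamard_conjTranspose_mul_self fun i ↦
    exists_ne_zero_of_conjTranspose_mul_self_apply_ne_zero (hBdiag i).ne'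
end

section
/- Let V₁,…,V_m be real n×n symmetric positive semidefinite matrices, and let a₁,…,a_m and b₁,…,b_m be strictly positive real numbers such that Ω = Σᵢ bᵢ Vᵢ is positive definite. Then (Σᵢ aᵢ Vᵢ)·Ω⁻¹·(Σᵢ aᵢ Vᵢ) ⪯ Σᵢ (aᵢ²/bᵢ)·Vᵢ, where ⪯ denotes the Loewner order (i.e., the difference Σᵢ (aᵢ²/bᵢ)·Vᵢ − (Σᵢ aᵢ Vᵢ)·Ω⁻¹·(Σᵢ aᵢ Vᵢ) is positive semidefinite). -/
/-! With `Ω = ∑ bᵢVᵢ`, `S = ∑ aᵢVᵢ` and `T = Ω⁻¹S`, the difference `∑ (aᵢ²/bᵢ)Vᵢ - SΩ⁻¹S` is the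
sum of squares `∑ bᵢ (aᵢ/bᵢ - T)ᴴ Vᵢ (aᵢ/bᵢ - T)`: expanding it gives `∑ (aᵢ²/bᵢ)Vᵢ - TᴴS - ST + TᴴΩT`,
and each of the last three terms equals `SΩ⁻¹S`. -/

namespace Matrix

open scoped ComplexOrder

variable {ι n 𝕜 : Type*} [Fintype ι] [Fintype n] [DecidableEq n] [RCLike 𝕜]

theorem sum_smul_conjTranspose_sub_mul_mul_sub (V : ι → Matrix n n 𝕜) (a b : ι → ℝ)
    (hb : ∀ i, b i ≠ 0) (T : Matrix n n 𝕜) :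
    ∑ i, b i • (((a i / b i) • 1 - T)ᴴ * V i * ((a i / b i) • 1 - T)) =
      ∑ i, (a i ^ 2 / b i) • V i - Tᴴ * (∑ i, a i • V i) - (∑ i, a i • V i) * T +
        Tᴴ * (∑ i, b i • V i) * T := by
  have hterm : ∀ i, b i • (((a i / b i) • 1 - T)ᴴ * V i * ((a i / b i) • 1 - T)) =
      (a i ^ 2 / b i) • V i - a i • (Tᴴ * V i) - a i • (V i * T) + b i • (Tᴴ * V i * T) := by
    intro i
    set c := a i / b i
    have hac : a i = b i * c := (mul_div_cancel₀ _ (hb i)).symm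
    have hac2 : a i ^ 2 / b i = b i * c ^ 2 := by rw [hac]; field_simp [hb i]
    rw [hac2, hac]
    simp only [conjTranspose_sub, conjTranspose_smul, conjTranspose_one, star_trivial,
      sub_mul, mul_sub, smul_mul_assoc, mul_smul_comm, one_mul, mul_one]
    module
  rw [Finset.sum_congr rfl fun i _ => hterm i]
  simp only [Finset.sum_add_distrib, Finset.sum_sub_distrib, Finset.mul_sum, Finset.sum_mul,
    mul_smul_comm, smul_mul_assoc, Matrix.mul_assoc]

theorem posSemidef_sum_sq_div_smul_sub_mul_inv_mul (V : ι → Matrix n n 𝕜)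
    (hV : ∀ i, (V i).PosSemidef) (a b : ι → ℝ) (hb : ∀ i, 0 < b i)
    (hΩ : IsUnit (∑ i, b i • V i)) :
    ((∑ i, (a i ^ 2 / b i) • V i) -
      (∑ i, a i • V i) * (∑ i, b i • V i)⁻¹ * (∑ i, a i • V i)).PosSemidef := by
  set S := ∑ i, a i • V i
  set Ω := ∑ i, b i • V i
  have isHermitian_sum_smul (c : ι → ℝ) : (∑ i, c i • V i).IsHermitian :=
    isSelfAdjoint_sum _ fun i _ => (IsSelfAdjoint.all (c i)).smul (hV i).isHermitian
  have hT : (Ω⁻¹ * S)ᴴ = S * Ω⁻¹ := by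
    rw [conjTranspose_mul, (isHermitian_sum_smul a).eq, (isHermitian_sum_smul b).inv.eq]
  have hΩS : S * Ω⁻¹ * Ω * (Ω⁻¹ * S) = S * (Ω⁻¹ * S) := by
    rw [Matrix.mul_assoc S, nonsing_inv_mul Ω ((isUnit_iff_isUnit_det Ω).mp hΩ), Matrix.mul_one]
  have hsos : (∑ i, (a i ^ 2 / b i) • V i) - S * Ω⁻¹ * S =
      ∑ i, b i • (((a i / b i) • 1 - Ω⁻¹ * S)ᴴ * V i * ((a i / b i) • 1 - Ω⁻¹ * S)) := by
    rw [sum_smul_conjTranspose_sub_mul_mul_sub V a b (fun i => (hb i).ne'), hT, hΩS,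
      Matrix.mul_assoc S]
    abel
  rw [hsos]
  exact posSemidef_sum _ fun i _ => ((hV i).conjTranspose_mul_mul_same _).smul (hb i).le

end Matrix

theorem mm_majorization_general (m n : ℕ) (V : Fin m → Matrix (Fin n) (Fin n) ℝ)
    (hV : ∀ i, (V i).PosSemidef) (a b : Fin m → ℝ)
    (hb : ∀ i, 0 < b i)
    (hΩ : (∑ i, b i • V i).PosDef) :
    ((∑ i, (a i ^ 2 / b i) • V i) -
      (∑ i, a i • V i) * (∑ i, b i • V i)⁻¹ * (∑ i, a i • V i)).PosSemidef :=
  Matrix.posSemidef_sum_sq_div_smul_sub_mul_inv_mul V hV a b hb hΩ.isUnit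

/-- the key MM majorization
`(∑ aᵢVᵢ) Ω⁻¹ (∑ aᵢVᵢ) ⪯ ∑ (aᵢ²/bᵢ) Vᵢ` where `Ω = ∑ bᵢVᵢ` is positive definite. -/
theorem mm_majorization (m n : ℕ) (V : Fin m → Matrix (Fin n) (Fin n) ℝ)
    (hV : ∀ i, (V i).PosSemidef) (a b : Fin m → ℝ)
    (ha : ∀ i, 0 < a i) (hb : ∀ i, 0 < b i)
    (hΩ : (∑ i, b i • V i).PosDef) :
    ((∑ i, (a i ^ 2 / b i) • V i) -
      (∑ i, a i • V i) * (∑ i, b i • V i)⁻¹ * (∑ i, a i • V i)).PosSemidef :=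
  mm_majorization_general m n V hV a b hb hΩ
end

section
/- Fix real n×n symmetric positive semidefinite matrices V₁,…,V_m with strictly positive diagonals and a vector y ∈ ℝⁿ. For σ² ∈ ℝ^m with nonnegative entries and Ω(σ²) = Σᵢ σᵢ² Vᵢ positive definite, define the REML log-likelihood L(σ²) = −½ ln det Ω(σ²) − ½ yᵀ Ω(σ²)⁻¹ y, and define the MM map M by (M(σ²))ᵢ = σᵢ²·√( (yᵀΩ(σ²)⁻¹VᵢΩ(σ²)⁻¹y) / tr(Ω(σ²)⁻¹Vᵢ) ), with (M(σ²))ᵢ = 0 when σᵢ² = 0. If both Ω(σ²) and Ω(M(σ²)) are positive definite, then L(M(σ²)) ≥ L(σ²) (the ascent property). -/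
/-!
Write `Ω = Ω(σ²)`, `Ω' = Ω(M(σ²))`, `w = Ω⁻¹y`, `qᵢ = wᵀVᵢw` and `rᵢ = tr(Ω⁻¹Vᵢ) > 0`, so that
`M(σ²)ᵢ = σᵢ² √(qᵢ/rᵢ)` and `Mᵢ rᵢ = σᵢ² √(qᵢrᵢ)`. Since `log det` is concave, its tangent plane
at `Ω` gives `log det Ω' ≤ log det Ω + tr(Ω⁻¹Ω') - n = log det Ω + ∑ (Mᵢ - σᵢ²) rᵢ`. With
`v = Ω'⁻¹y` and `y = Ωw` we have `yᵀΩ'⁻¹y = 2 vᵀΩw - vᵀΩ'v = ∑ (2σᵢ² vᵀVᵢw - Mᵢ vᵀVᵢv)`, and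
Cauchy–Schwarz for the form `Vᵢ` bounds the `i`-th summand by `σᵢ² √(qᵢrᵢ)`. Finally
`yᵀΩ⁻¹y = ∑ σᵢ² qᵢ` and AM–GM `2√(qᵢrᵢ) ≤ qᵢ + rᵢ` combine the two bounds into the ascent inequality.
-/

open Matrix

/-- The covariance matrix `Ω(σ²) = ∑ i, σᵢ² Vᵢ`. -/
noncomputable def covMat {m n : ℕ} (V : Fin m → Matrix (Fin n) (Fin n) ℝ)
    (s : Fin m → ℝ) : Matrix (Fin n) (Fin n) ℝ :=
  ∑ i, s i • V i

/-- The REML log-likelihood `L(σ²) = −½ ln det Ω(σ²) − ½ yᵀ Ω(σ²)⁻¹ y`. -/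
noncomputable def remlLogLik {m n : ℕ} (V : Fin m → Matrix (Fin n) (Fin n) ℝ)
    (y : Fin n → ℝ) (s : Fin m → ℝ) : ℝ :=
  -(1 / 2 : ℝ) * Real.log (covMat V s).det -
    (1 / 2 : ℝ) * (y ⬝ᵥ (covMat V s)⁻¹ *ᵥ y)

/-- The MM map `(M(σ²))ᵢ = σᵢ² √( (yᵀΩ⁻¹VᵢΩ⁻¹y) / tr(Ω⁻¹Vᵢ) )` (which is `0` whenever
`σᵢ² = 0`). -/
noncomputable def mmMap {m n : ℕ} (V : Fin m → Matrix (Fin n) (Fin n) ℝ)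
    (y : Fin n → ℝ) (s : Fin m → ℝ) : Fin m → ℝ := fun i =>
  s i * Real.sqrt ((y ⬝ᵥ ((covMat V s)⁻¹ * V i * (covMat V s)⁻¹) *ᵥ y) /
    ((covMat V s)⁻¹ * V i).trace)

namespace Matrix

variable {ι : Type*} [Fintype ι]

lemma IsSymm.dotProduct_mul_mul_mulVec {R : Type*} [CommSemiring R] {C : Matrix ι ι R}
    (hC : C.IsSymm) (W : Matrix ι ι R) (x : ι → R) :
    x ⬝ᵥ (C * W * C) *ᵥ x = (C *ᵥ x) ⬝ᵥ W *ᵥ (C *ᵥ x) := by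
  rw [← mulVec_mulVec, ← mulVec_mulVec, dotProduct_mulVec x C, ← mulVec_transpose, hC.eq]

open scoped MatrixOrder

lemma PosSemidef.dotProduct_mulVec_le_sqrt_mul_sqrt {V : Matrix ι ι ℝ} (hV : V.PosSemidef)
    (v w : ι → ℝ) : v ⬝ᵥ V *ᵥ w ≤ √(v ⬝ᵥ V *ᵥ v) * √(w ⬝ᵥ V *ᵥ w) := by
  classical
  obtain ⟨S, rfl⟩ := CStarAlgebra.nonneg_iff_eq_star_mul_self.mp hV.nonneg
  have hS (a b : ι → ℝ) : a ⬝ᵥ (star S * S) *ᵥ b = ∑ k, (S *ᵥ a) k * (S *ᵥ b) k := by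
    rw [← mulVec_mulVec, dotProduct_mulVec, star_eq_conjTranspose, vecMul_conjTranspose]
    simp [dotProduct]
  simpa only [hS, pow_two] using Real.sum_mul_le_sqrt_mul_sqrt Finset.univ (S *ᵥ v) (S *ᵥ w)

lemma PosDef.trace_mul_pos {B W : Matrix ι ι ℝ} (hB : B.PosDef) (hW : W.PosSemidef)
    (hW0 : W ≠ 0) : 0 < (B * W).trace := by
  classical
  obtain ⟨R, rfl⟩ := CStarAlgebra.nonneg_iff_eq_star_mul_self.mp hB.posSemidef.nonneg
  have hRunit : IsUnit R := isUnit_of_mul_isUnit_right hB.isUnit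
  have hconj : (R * W * star R).PosSemidef := by
    simpa [star_eq_conjTranspose] using hW.mul_mul_conjTranspose_same R
  have hne : R * W * star R ≠ 0 := by
    rwa [mul_assoc, Ne, hRunit.mul_right_eq_zero, hRunit.star.mul_left_eq_zero]
  rw [← trace_mul_cycle]
  exact hconj.trace_nonneg.lt_of_ne (Ne.symm <| mt hconj.trace_eq_zero_iff.mp hne)

variable [DecidableEq ι]

lemma PosDef.log_det_le_trace_sub_card {M : Matrix ι ι ℝ} (hM : M.PosDef) :
    Real.log M.det ≤ M.trace - Fintype.card ι := by
  have hpos := hM.eigenvalues_pos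
  rw [hM.isHermitian.det_eq_prod_eigenvalues, hM.isHermitian.trace_eq_sum_eigenvalues]
  simp only [RCLike.ofReal_real_eq_id, id]
  rw [Real.log_prod fun i _ => (hpos i).ne']
  calc ∑ i, Real.log (hM.isHermitian.eigenvalues i) ≤ ∑ i, (hM.isHermitian.eigenvalues i - 1) :=
        Finset.sum_le_sum fun i _ => Real.log_le_sub_one_of_pos (hpos i)
    _ = _ := by simp [Finset.sum_sub_distrib]

lemma PosDef.log_det_le_log_det_add_trace_sub_card {A B : Matrix ι ι ℝ} (hA : A.PosDef)
    (hB : B.PosDef) :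
    Real.log B.det ≤ Real.log A.det + ((A⁻¹ * B).trace - Fintype.card ι) := by
  obtain ⟨T, hT⟩ := CStarAlgebra.nonneg_iff_eq_star_mul_self.mp hA.inv.posSemidef.nonneg
  have hTunit : IsUnit T := isUnit_of_mul_isUnit_right (hT ▸ hA.inv.isUnit)
  have hM : (T * B * star T).PosDef := (IsUnit.posDef_star_right_conjugate_iff hTunit).mpr hB
  have hdet : (T * B * star T).det = A.det⁻¹ * B.det := by
    rw [det_mul, det_mul, mul_right_comm, ← det_mul, det_mul_comm, ← hT, det_nonsing_inv,
      Ring.inverse_eq_inv']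
  have htrace : (T * B * star T).trace = (A⁻¹ * B).trace := by
    rw [trace_mul_cycle, hT]
  have h := hM.log_det_le_trace_sub_card
  rw [hdet, htrace, Real.log_mul (inv_pos.mpr hA.det_pos).ne' hB.det_pos.ne', Real.log_inv] at h
  linarith

end Matrix

lemma sqrt_div_mul_self_eq_sqrt_mul {q r : ℝ} (hr : 0 ≤ r) : √(q / r) * r = √(q * r) := by
  rcases hr.eq_or_lt with rfl | hr
  · simp
  rw [Real.sqrt_div' _ hr.le, Real.sqrt_mul' _ hr.le]
  field_simp
  rw [Real.sq_sqrt hr.le]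

lemma two_mul_sqrt_mul_le_add {q r : ℝ} (hq : 0 ≤ q) (hr : 0 ≤ r) : 2 * √(q * r) ≤ q + r := by
  rw [Real.sqrt_mul hq, ← mul_assoc]
  simpa [Real.sq_sqrt hq, Real.sq_sqrt hr] using two_mul_le_add_sq √q √r

lemma two_mul_sub_sqrt_div_mul_le_sqrt_mul {c p q r : ℝ} (hp : 0 ≤ p) (hr : 0 < r)
    (hc : c ≤ √p * √q) : 2 * c - √(q / r) * p ≤ √(q * r) := by
  rw [Real.sqrt_div' _ hr.le, Real.sqrt_mul' _ hr.le, ← Real.sq_sqrt hp]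
  have hd := Real.sqrt_pos.mpr hr
  rw [div_mul_eq_mul_div, sub_le_iff_le_add, ← sub_le_iff_le_add', le_div_iff₀ hd]
  nlinarith [mul_nonneg (Real.sqrt_nonneg q) (sq_nonneg (√p - √r)), Real.sq_sqrt hr.le]

section covMat

variable {m n : ℕ} {V : Fin m → Matrix (Fin n) (Fin n) ℝ}

lemma dotProduct_covMat_mulVec (c : Fin m → ℝ) (x z : Fin n → ℝ) :
    x ⬝ᵥ covMat V c *ᵥ z = ∑ i, c i * (x ⬝ᵥ V i *ᵥ z) := by
  simp [covMat, sum_mulVec, dotProduct_sum, smul_mulVec, dotProduct_smul]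

lemma trace_mul_covMat (A : Matrix (Fin n) (Fin n) ℝ) (c : Fin m → ℝ) :
    (A * covMat V c).trace = ∑ i, c i * (A * V i).trace := by
  simp [covMat, Matrix.mul_sum, trace_sum]

lemma log_det_covMat_le {s t : Fin m → ℝ} (hs : (covMat V s).PosDef) (ht : (covMat V t).PosDef) :
    Real.log (covMat V t).det ≤
      Real.log (covMat V s).det + ∑ i, (t i - s i) * ((covMat V s)⁻¹ * V i).trace := by
  have hcard : (Fintype.card (Fin n) : ℝ) = ((covMat V s)⁻¹ * covMat V s).trace := by
    simp [nonsing_inv_mul _ ((isUnit_iff_isUnit_det _).mp hs.isUnit)]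
  have h := hs.log_det_le_log_det_add_trace_sub_card ht
  rw [hcard, trace_mul_covMat, trace_mul_covMat, ← Finset.sum_sub_distrib] at h
  simpa only [sub_mul] using h

lemma mmMap_apply_of_posDef {y : Fin n → ℝ} {s : Fin m → ℝ} (hs : (covMat V s).PosDef)
    (i : Fin m) :
    mmMap V y s i = s i * √(((covMat V s)⁻¹ *ᵥ y) ⬝ᵥ V i *ᵥ ((covMat V s)⁻¹ *ᵥ y) /
      ((covMat V s)⁻¹ * V i).trace) := by
  rw [mmMap, (isHermitian_iff_isSymm.mp hs.inv.isHermitian).dotProduct_mul_mul_mulVec]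

lemma dotProduct_inv_covMat_mulVec_le (hV : ∀ i, (V i).PosSemidef) {s t r : Fin m → ℝ}
    {w : Fin n → ℝ} (hs : ∀ i, 0 ≤ s i) (hr : ∀ i, 0 < r i)
    (ht : ∀ i, t i = s i * √((w ⬝ᵥ V i *ᵥ w) / r i)) (hB : (covMat V t).PosDef) :
    (covMat V s *ᵥ w) ⬝ᵥ (covMat V t)⁻¹ *ᵥ (covMat V s *ᵥ w) ≤
      ∑ i, s i * √((w ⬝ᵥ V i *ᵥ w) * r i) := by
  set y := covMat V s *ᵥ w
  set v := (covMat V t)⁻¹ *ᵥ y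
  have hv : covMat V t *ᵥ v = y := by
    rw [mulVec_mulVec, mul_nonsing_inv _ ((isUnit_iff_isUnit_det _).mp hB.isUnit), one_mulVec]
  have hsplit : y ⬝ᵥ v = ∑ i, (2 * (s i * (v ⬝ᵥ V i *ᵥ w)) - t i * (v ⬝ᵥ V i *ᵥ v)) := by
    rw [Finset.sum_sub_distrib, ← Finset.mul_sum, ← dotProduct_covMat_mulVec,
      ← dotProduct_covMat_mulVec, hv, dotProduct_comm]
    ring
  refine hsplit.trans_le (Finset.sum_le_sum fun i _ => ?_)
  have hp : 0 ≤ v ⬝ᵥ V i *ᵥ v := by simpa using (hV i).dotProduct_mulVec_nonneg v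
  have hterm := two_mul_sub_sqrt_div_mul_le_sqrt_mul hp (hr i)
    ((hV i).dotProduct_mulVec_le_sqrt_mul_sqrt v w)
  rw [ht i]
  linear_combination mul_le_mul_of_nonneg_left hterm (hs i)

end covMat

/-- the ascent property of the MM algorithm: `L(M(σ²)) ≥ L(σ²)`. -/
theorem mm_ascent (m n : ℕ) (V : Fin m → Matrix (Fin n) (Fin n) ℝ)
    (hV : ∀ i, (V i).PosSemidef) (hVdiag : ∀ i j, 0 < V i j j)
    (y : Fin n → ℝ) (s : Fin m → ℝ) (hs : ∀ i, 0 ≤ s i)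
    (hΩ : (covMat V s).PosDef) (hΩ' : (covMat V (mmMap V y s)).PosDef) :
    remlLogLik V y s ≤ remlLogLik V y (mmMap V y s) := by
  rcases isEmpty_or_nonempty (Fin n) with hn | ⟨⟨j⟩⟩
  · simp [remlLogLik, dotProduct]
  set t := mmMap V y s
  set w := (covMat V s)⁻¹ *ᵥ y
  set q := fun i => w ⬝ᵥ V i *ᵥ w
  set r := fun i => ((covMat V s)⁻¹ * V i).trace
  have hq i : 0 ≤ q i := by simpa using (hV i).dotProduct_mulVec_nonneg w
  have hr i : 0 < r i := hΩ.inv.trace_mul_pos (hV i) fun h => (hVdiag i j).ne' (by simp [h])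
  have ht i : t i = s i * √(q i / r i) := mmMap_apply_of_posDef hΩ i
  have hy : covMat V s *ᵥ w = y := by
    rw [mulVec_mulVec, mul_nonsing_inv _ ((isUnit_iff_isUnit_det _).mp hΩ.isUnit), one_mulVec]
  have hyΩ : y ⬝ᵥ w = ∑ i, s i * q i := by
    rw [← dotProduct_covMat_mulVec, dotProduct_comm, hy]
  have hlogdet : Real.log (covMat V t).det ≤ Real.log (covMat V s).det + ∑ i, (t i - s i) * r i :=
    log_det_covMat_le hΩ hΩ'
  have hquad : y ⬝ᵥ (covMat V t)⁻¹ *ᵥ y ≤ ∑ i, s i * √(q i * r i) := by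
    simpa only [hy] using dotProduct_inv_covMat_mulVec_le hV hs hr ht hΩ'
  have hsum : ∑ i, ((t i - s i) * r i + s i * √(q i * r i)) ≤ ∑ i, s i * q i := by
    refine Finset.sum_le_sum fun i _ => ?_
    rw [ht i, sub_mul, mul_assoc, sqrt_div_mul_self_eq_sqrt_mul (hr i).le]
    nlinarith [mul_le_mul_of_nonneg_left (two_mul_sqrt_mul_le_add (hq i) (hr i).le) (hs i)]
  rw [Finset.sum_add_distrib] at hsum
  simp only [remlLogLik]
  linarith
end

section
/- Let V₁,…,V_m be real n×n symmetric positive semidefinite matrices with V₁ positive definite and V₂,…,V_m nonzero. Let ℋ ⊆ ℝⁿ be the subspace spanned by the union of the column spaces of V₂,…,V_m, assume dim ℋ = q < n, and let y ∈ ℝⁿ with y ∉ ℋ. For σ² ∈ ℝ^m with nonnegative entries such that Ω(σ²) = Σᵢ σᵢ² Vᵢ is positive definite, set L(σ²) = −½ ln det Ω(σ²) − ½ yᵀ Ω(σ²)⁻¹ y. Then for every c ∈ ℝ, the super-level set S_c = { σ² ∈ ℝ^m : σᵢ² ≥ 0 for all i, Ω(σ²) positive definite, L(σ²) ≥ c }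 is compact. -/
/-!
Choose `w ⊥ ℋ` with `w ⬝ᵥ y ≠ 0`. Then `wᵀ Ω(s) w = s₀ · wᵀ V₀ w`, so Cauchy–Schwarz for the
form `Ω` gives `yᵀ Ω⁻¹ y ≥ (w ⬝ᵥ y)² / (s₀ · wᵀ V₀ w)`; and `Ω(s) ≥ s₀ r I`, where `r > 0` bounds
the spectrum of `V₀` from below, gives `ln det Ω ≥ n ln (s₀ r)`. Hence
`L(s) ≤ -(n/2) ln s₀ - K / s₀ + const` with `K > 0`, which tends to `-∞` both as `s₀ → 0⁺` and as
`s₀ → ∞`, so `s₀` is confined to some `[a, b] ⊂ (0, ∞)`. Once `s₀ ≥ a`, all eigenvalues of `Ω`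
are at least `a r`, so `n det Ω ≥ (a r)ⁿ⁻¹ tr Ω ≥ (a r)ⁿ⁻¹ sᵢ tr Vᵢ`, while `L ≥ c` forces
`det Ω ≤ e^(-2c)`; as `tr Vᵢ > 0` this bounds `sᵢ`. The super-level set thus lies in a box on
which `Ω` stays positive definite, so `L` is continuous there and the set is closed in the box.
-/

open Matrix

/-- The subspace `ℋ` spanned by the union of the column spaces of `V i`, `i ≠ 0`. -/
noncomputable def spanH {m n : ℕ} (V : Fin (m + 1) → Matrix (Fin n) (Fin n) ℝ) :
    Submodule ℝ (Fin n → ℝ) :=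
  ⨆ i : {i : Fin (m + 1) // i ≠ 0}, LinearMap.range (V i.1).mulVecLin

open Filter Topology Real
open scoped MatrixOrder

namespace Finset
variable {ι : Type*} [DecidableEq ι]

theorem pow_card_sub_one_mul_le_prod {s : Finset ι} {f : ι → ℝ} {b : ℝ} (hb : 0 ≤ b)
    (h : ∀ i ∈ s, b ≤ f i) {j : ι} (hj : j ∈ s) : b ^ (#s - 1) * f j ≤ ∏ i ∈ s, f i := by
  rw [← mul_prod_erase s f hj, mul_comm]
  have hbound : b ^ (#s - 1) ≤ ∏ i ∈ s.erase j, f i := by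
    rw [← card_erase_of_mem hj, ← prod_const]
    exact prod_le_prod (fun _ _ => hb) fun i hi => h i (mem_of_mem_erase hi)
  exact mul_le_mul_of_nonneg_left hbound (hb.trans (h j hj))

theorem pow_card_sub_one_mul_sum_le_card_mul_prod {s : Finset ι} {f : ι → ℝ} {b : ℝ}
    (hb : 0 ≤ b) (h : ∀ i ∈ s, b ≤ f i) :
    b ^ (#s - 1) * ∑ i ∈ s, f i ≤ #s * ∏ i ∈ s, f i := by
  rw [mul_sum, ← nsmul_eq_mul, ← sum_const]
  exact sum_le_sum fun j hj => pow_card_sub_one_mul_le_prod hb h hj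

end Finset

namespace Matrix
variable {ι : Type*} [Fintype ι]

theorem PosSemidef.sq_dotProduct_mulVec_le {A : Matrix ι ι ℝ} (hA : A.PosSemidef)
    (x y : ι → ℝ) : (x ⬝ᵥ A *ᵥ y) ^ 2 ≤ (x ⬝ᵥ A *ᵥ x) * (y ⬝ᵥ A *ᵥ y) := by
  have hsymm : y ⬝ᵥ A *ᵥ x = x ⬝ᵥ A *ᵥ y := by
    have hT : Aᵀ = A := by rw [← conjTranspose_eq_transpose_of_trivial, hA.isHermitian.eq]
    rw [dotProduct_mulVec, ← hT, vecMul_transpose, hT, dotProduct_comm]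
  have hquad : ∀ t : ℝ,
      0 ≤ (y ⬝ᵥ A *ᵥ y) * (t * t) + 2 * (x ⬝ᵥ A *ᵥ y) * t + x ⬝ᵥ A *ᵥ x := by
    intro t
    have := hA.dotProduct_mulVec_nonneg (x + t • y)
    simp only [star_trivial, mulVec_add, mulVec_smul, dotProduct_add, add_dotProduct,
      dotProduct_smul, smul_dotProduct, smul_eq_mul, hsymm] at this
    linarith
  have := discrim_le_zero hquad
  rw [discrim] at this
  linarith

variable [DecidableEq ι]

theorem PosDef.exists_pos_algebraMap_le [Nonempty ι] {A : Matrix ι ι ℝ} (hA : A.PosDef) :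
    ∃ r > 0, algebraMap ℝ _ r ≤ A :=
  (CFC.exists_pos_algebraMap_le_iff hA.isHermitian).2 fun _ hx =>
    hA.isStrictlyPositive.spectrum_pos hx

theorem IsHermitian.le_eigenvalues_of_algebraMap_le {A : Matrix ι ι ℝ} (hA : A.IsHermitian)
    {b : ℝ} (h : algebraMap ℝ _ b ≤ A) (j : ι) : b ≤ hA.eigenvalues j :=
  (algebraMap_le_iff_le_spectrum hA).1 h _ (hA.eigenvalues_mem_spectrum_real j)

theorem IsHermitian.pow_card_le_det {A : Matrix ι ι ℝ} (hA : A.IsHermitian) {b : ℝ}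
    (hb : 0 ≤ b) (h : algebraMap ℝ _ b ≤ A) : b ^ Fintype.card ι ≤ A.det := by
  rw [hA.det_eq_prod_eigenvalues, ← Finset.card_univ, ← Finset.prod_const]
  exact Finset.prod_le_prod (fun _ _ => hb) fun j _ => hA.le_eigenvalues_of_algebraMap_le h j

theorem IsHermitian.pow_card_sub_one_mul_trace_le {A : Matrix ι ι ℝ} (hA : A.IsHermitian)
    {b : ℝ} (hb : 0 ≤ b) (h : algebraMap ℝ _ b ≤ A) :
    b ^ (Fintype.card ι - 1) * A.trace ≤ Fintype.card ι * A.det := by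
  rw [hA.trace_eq_sum_eigenvalues, hA.det_eq_prod_eigenvalues, ← Finset.card_univ]
  exact Finset.pow_card_sub_one_mul_sum_le_card_mul_prod hb
    fun j _ => hA.le_eigenvalues_of_algebraMap_le h j

theorem PosDef.sq_dotProduct_le_mul_inv {A : Matrix ι ι ℝ} (hA : A.PosDef) (x y : ι → ℝ) :
    (x ⬝ᵥ y) ^ 2 ≤ (x ⬝ᵥ A *ᵥ x) * (y ⬝ᵥ A⁻¹ *ᵥ y) := by
  have hy : A *ᵥ (A⁻¹ *ᵥ y) = y := by
    rw [mulVec_mulVec, mul_nonsing_inv _ (isUnit_iff_ne_zero.2 hA.det_pos.ne'), one_mulVec]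
  have := hA.posSemidef.sq_dotProduct_mulVec_le x (A⁻¹ *ᵥ y)
  rwa [hy, dotProduct_comm (A⁻¹ *ᵥ y)] at this

end Matrix

theorem Submodule.exists_dotProduct_ne_zero_of_notMem {K ι : Type*} [Field K] [Fintype ι]
    [DecidableEq ι] {p : Submodule K (ι → K)} {y : ι → K} (hy : y ∉ p) :
    ∃ w : ι → K, (∀ v ∈ p, w ⬝ᵥ v = 0) ∧ w ⬝ᵥ y ≠ 0 := by
  obtain ⟨f, hfy, hfp⟩ := exists_dual_map_eq_bot_of_notMem hy inferInstance
  have hf : ∀ v, (dotProductEquiv K ι).symm f ⬝ᵥ v = f v := fun v =>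
    LinearMap.congr_fun ((dotProductEquiv K ι).apply_symm_apply f) v
  refine ⟨(dotProductEquiv K ι).symm f, fun v hv => ?_, by rwa [hf]⟩
  rw [hf, ← Submodule.mem_bot K, ← hfp]
  exact Submodule.mem_map_of_mem hv

theorem tendsto_mul_log_sub_div_nhdsGT_zero (C : ℝ) {K : ℝ} (hK : 0 < K) :
    Tendsto (fun t => C * log t - K / t) (𝓝[>] 0) atBot := by
  have hmul_log : Tendsto (fun t => C * (t * log t) - K) (𝓝[>] 0) (𝓝 (-K)) := by
    simpa using ((continuous_mul_log.tendsto 0).mono_left nhdsWithin_le_nhds).const_mul C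
      |>.sub_const K
  refine (tendsto_inv_nhdsGT_zero.atTop_mul_neg (neg_neg_of_pos hK) hmul_log).congr' ?_
  filter_upwards [self_mem_nhdsWithin] with t (ht : 0 < t)
  field_simp

theorem tendsto_mul_log_sub_div_atTop {C K : ℝ} (hC : C < 0) (hK : 0 ≤ K) :
    Tendsto (fun t => C * log t - K / t) atTop atBot := by
  refine tendsto_atBot_mono' atTop ?_ (tendsto_log_atTop.const_mul_atTop_of_neg hC)
  filter_upwards [eventually_gt_atTop 0] with t ht
  linarith [div_nonneg hK ht.le]

theorem exists_forall_mem_Icc_of_le_mul_log_sub_div {C K : ℝ} (hC : C < 0) (hK : 0 < K)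
    (c : ℝ) : ∃ a > 0, ∃ b, ∀ t > 0, c ≤ C * log t - K / t → t ∈ Set.Icc a b := by
  obtain ⟨a, ha, hsmall⟩ := mem_nhdsGT_iff_exists_Ioc_subset.1
    ((tendsto_mul_log_sub_div_nhdsGT_zero C hK).eventually_lt_atBot c)
  obtain ⟨b, hlarge⟩ := eventually_atTop.1
    ((tendsto_mul_log_sub_div_atTop hC hK.le).eventually_lt_atBot c)
  refine ⟨a, ha, b, fun t ht hct => ⟨?_, ?_⟩⟩
  · by_contra! hta
    exact (hsmall ⟨ht, hta.le⟩).not_ge hct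
  · by_contra! htb
    exact (hlarge t htb.le).not_ge hct

section Reml
variable {m n : ℕ}

def remlSuperlevelSet (V : Fin m → Matrix (Fin n) (Fin n) ℝ) (y : Fin n → ℝ) (c : ℝ) :
    Set (Fin m → ℝ) :=
  {s | (∀ i, 0 ≤ s i) ∧ (covMat V s).PosDef ∧ c ≤ remlLogLik V y s}

theorem continuous_covMat (V : Fin m → Matrix (Fin n) (Fin n) ℝ) : Continuous (covMat V) :=
  continuous_finsetSum _ fun i _ => (continuous_apply i).smul continuous_const

theorem continuousAt_remlLogLik (V : Fin m → Matrix (Fin n) (Fin n) ℝ) (y : Fin n → ℝ)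
    {s : Fin m → ℝ} (hs : (covMat V s).det ≠ 0) : ContinuousAt (remlLogLik V y) s := by
  have hlogDet : ContinuousAt (fun M : Matrix (Fin n) (Fin n) ℝ => log M.det) (covMat V s) :=
    (continuousAt_log hs).comp continuous_id.matrix_det.continuousAt
  have hinv : ContinuousAt Inv.inv (covMat V s) :=
    continuousAt_matrix_inv _ (by rw [Ring.inverse_eq_inv']; exact continuousAt_inv₀ hs)
  have hquad : Continuous fun M : Matrix (Fin n) (Fin n) ℝ => y ⬝ᵥ M *ᵥ y :=
    continuous_const.dotProduct (continuous_id.matrix_mulVec continuous_const)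
  exact ((continuousAt_const.mul hlogDet).sub
    (continuousAt_const.mul (hquad.continuousAt.comp hinv))).comp
    (continuous_covMat V).continuousAt

theorem covMat_posSemidef {V : Fin m → Matrix (Fin n) (Fin n) ℝ} (hV : ∀ i, (V i).PosSemidef)
    {s : Fin m → ℝ} (hs : ∀ i, 0 ≤ s i) : (covMat V s).PosSemidef :=
  posSemidef_sum _ fun i _ => (hV i).smul (hs i)

theorem covMat_trace (V : Fin m → Matrix (Fin n) (Fin n) ℝ) (s : Fin m → ℝ) :
    (covMat V s).trace = ∑ i, s i * (V i).trace := by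
  simp only [covMat, trace_sum, trace_smul, smul_eq_mul]

theorem remlLogLik_le_neg_half_log_det {V : Fin m → Matrix (Fin n) (Fin n) ℝ}
    (y : Fin n → ℝ) {s : Fin m → ℝ} (hΩ : (covMat V s).PosDef) :
    remlLogLik V y s ≤ -(1 / 2) * log (covMat V s).det := by
  have := hΩ.inv.posSemidef.dotProduct_mulVec_nonneg y
  rw [star_trivial] at this
  unfold remlLogLik
  linarith

theorem covMat_eq_smul_add (V : Fin (m + 1) → Matrix (Fin n) (Fin n) ℝ) (s : Fin (m + 1) → ℝ) :
    covMat V s = s 0 • V 0 + covMat (fun i => V i.succ) (fun i => s i.succ) :=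
  Fin.sum_univ_succ _

theorem covMat_succ_mulVec_mem_spanH (V : Fin (m + 1) → Matrix (Fin n) (Fin n) ℝ)
    (t : Fin m → ℝ) (x : Fin n → ℝ) :
    covMat (fun i => V i.succ) t *ᵥ x ∈ spanH V := by
  rw [covMat, sum_mulVec]
  refine Submodule.sum_mem _ fun i _ => ?_
  rw [smul_mulVec]
  exact Submodule.smul_mem _ _
    (Submodule.mem_iSup_of_mem ⟨i.succ, Fin.succ_ne_zero i⟩ ⟨x, rfl⟩)

variable {V : Fin (m + 1) → Matrix (Fin n) (Fin n) ℝ}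

theorem covMat_posDef (hV : ∀ i, (V i).PosSemidef) (hV0 : (V 0).PosDef)
    {s : Fin (m + 1) → ℝ} (hs : ∀ i, 0 ≤ s i) (hs0 : 0 < s 0) : (covMat V s).PosDef := by
  rw [covMat_eq_smul_add]
  exact (hV0.smul hs0).add_posSemidef (covMat_posSemidef (fun _ => hV _) fun _ => hs _)

theorem algebraMap_mul_le_covMat (hV : ∀ i, (V i).PosSemidef) {r : ℝ}
    (hr : algebraMap ℝ _ r ≤ V 0) {s : Fin (m + 1) → ℝ} (hs : ∀ i, 0 ≤ s i) :
    algebraMap ℝ _ (s 0 * r) ≤ covMat V s := by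
  rw [le_iff, covMat_eq_smul_add, map_mul, Algebra.algebraMap_eq_smul_one (s 0), smul_one_mul,
    add_sub_right_comm, ← smul_sub]
  exact ((le_iff.1 hr).smul (hs 0)).add (covMat_posSemidef (fun _ => hV _) fun _ => hs _)

theorem dotProduct_covMat_mulVec_of_orthogonal {w : Fin n → ℝ}
    (hw : ∀ v ∈ spanH V, w ⬝ᵥ v = 0) (s : Fin (m + 1) → ℝ) :
    w ⬝ᵥ covMat V s *ᵥ w = s 0 * (w ⬝ᵥ V 0 *ᵥ w) := by
  rw [covMat_eq_smul_add, add_mulVec, dotProduct_add, hw _ (covMat_succ_mulVec_mem_spanH V _ w),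
    add_zero, smul_mulVec, dotProduct_smul, smul_eq_mul]

theorem pos_of_covMat_posDef (hV0 : (V 0).PosSemidef) {w : Fin n → ℝ}
    (hw : ∀ v ∈ spanH V, w ⬝ᵥ v = 0) (hw0 : w ≠ 0) {s : Fin (m + 1) → ℝ}
    (hΩ : (covMat V s).PosDef) : 0 < s 0 := by
  have h := hΩ.dotProduct_mulVec_pos hw0
  rw [star_trivial, dotProduct_covMat_mulVec_of_orthogonal hw] at h
  exact pos_of_mul_pos_left h (hV0.dotProduct_mulVec_nonneg w)

theorem remlLogLik_le_mul_log_sub_div (hV : ∀ i, (V i).PosSemidef) (hV0 : (V 0).PosDef)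
    {r : ℝ} (hr : 0 < r) (hrV : algebraMap ℝ _ r ≤ V 0) {w : Fin n → ℝ}
    (hw : ∀ v ∈ spanH V, w ⬝ᵥ v = 0) (hw0 : w ≠ 0) (y : Fin n → ℝ) {s : Fin (m + 1) → ℝ}
    (hs : ∀ i, 0 ≤ s i) (hΩ : (covMat V s).PosDef) :
    remlLogLik V y s ≤ -(n / 2) * log (s 0) - (w ⬝ᵥ y) ^ 2 / (2 * (w ⬝ᵥ V 0 *ᵥ w)) / s 0
      - n / 2 * log r := by
  have hs0 := pos_of_covMat_posDef hV0.posSemidef hw hw0 hΩ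
  have hβ : 0 < w ⬝ᵥ V 0 *ᵥ w := by simpa using hV0.dotProduct_mulVec_pos hw0
  have hdet : (s 0 * r) ^ n ≤ (covMat V s).det := by
    simpa using hΩ.isHermitian.pow_card_le_det (by positivity)
      (algebraMap_mul_le_covMat hV hrV hs)
  have hlogDet : n * (log (s 0) + log r) ≤ log (covMat V s).det := by
    rw [← log_mul hs0.ne' hr.ne', ← log_pow]
    exact log_le_log (by positivity) hdet
  have hcs : (w ⬝ᵥ y) ^ 2 ≤ s 0 * (w ⬝ᵥ V 0 *ᵥ w) * (y ⬝ᵥ (covMat V s)⁻¹ *ᵥ y) := by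
    simpa [dotProduct_covMat_mulVec_of_orthogonal hw] using hΩ.sq_dotProduct_le_mul_inv w y
  have hquad : (w ⬝ᵥ y) ^ 2 / (2 * (w ⬝ᵥ V 0 *ᵥ w)) / s 0 ≤
      (1 / 2) * (y ⬝ᵥ (covMat V s)⁻¹ *ᵥ y) := by
    rw [div_div, div_le_iff₀ (by positivity)]
    linarith
  unfold remlLogLik
  linarith

theorem mul_trace_le_of_le_remlLogLik {V : Fin m → Matrix (Fin n) (Fin n) ℝ}
    (hV : ∀ i, (V i).PosSemidef) {y : Fin n → ℝ} {s : Fin m → ℝ} (hs : ∀ i, 0 ≤ s i)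
    (hΩ : (covMat V s).PosDef) {A : ℝ} (hA : 0 ≤ A) (hAΩ : algebraMap ℝ _ A ≤ covMat V s)
    {c : ℝ} (hc : c ≤ remlLogLik V y s) (i : Fin m) :
    A ^ (n - 1) * (s i * (V i).trace) ≤ n * exp (-(2 * c)) := by
  have htrace : s i * (V i).trace ≤ (covMat V s).trace := by
    rw [covMat_trace]
    exact Finset.single_le_sum (fun j _ => mul_nonneg (hs j) (hV j).trace_nonneg)
      (Finset.mem_univ i)
  have hdet : (covMat V s).det ≤ exp (-(2 * c)) := by
    rw [← log_le_iff_le_exp hΩ.det_pos]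
    linarith [remlLogLik_le_neg_half_log_det y hΩ]
  calc A ^ (n - 1) * (s i * (V i).trace) ≤ A ^ (n - 1) * (covMat V s).trace := by gcongr
    _ ≤ n * (covMat V s).det := by
      simpa using hΩ.isHermitian.pow_card_sub_one_mul_trace_le hA hAΩ
    _ ≤ n * exp (-(2 * c)) := by gcongr

theorem exists_remlSuperlevelSet_subset_Icc (hV : ∀ i, (V i).PosSemidef)
    (hV0 : (V 0).PosDef) (hVne : ∀ i, i ≠ 0 → V i ≠ 0) {y : Fin n → ℝ} (hy : y ∉ spanH V)
    (c : ℝ) : ∃ a > 0, ∃ b : Fin (m + 1) → ℝ,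
      remlSuperlevelSet V y c ⊆ Set.Icc (Pi.single 0 a) b := by
  have hn : 0 < n := Nat.pos_of_ne_zero fun hn => hy <| by
    subst hn
    simpa [Subsingleton.elim y 0] using (spanH V).zero_mem
  have : Nonempty (Fin n) := Fin.pos_iff_nonempty.1 hn
  obtain ⟨r, hr, hrV⟩ := hV0.exists_pos_algebraMap_le
  obtain ⟨w, hw, hwy⟩ := (spanH V).exists_dotProduct_ne_zero_of_notMem hy
  have hw0 : w ≠ 0 := by rintro rfl; simp at hwy
  have hK : 0 < (w ⬝ᵥ y) ^ 2 / (2 * (w ⬝ᵥ V 0 *ᵥ w)) := by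
    have := hV0.dotProduct_mulVec_pos hw0
    simp only [star_trivial] at this
    exact div_pos (sq_pos_of_ne_zero hwy) (by positivity)
  obtain ⟨a, ha, b, hab⟩ := exists_forall_mem_Icc_of_le_mul_log_sub_div
    (C := -(n / 2)) (neg_neg_of_pos (by positivity)) hK (c + n / 2 * log r)
  refine ⟨a, ha,
    Function.update (fun i => n * exp (-(2 * c)) / ((a * r) ^ (n - 1) * (V i).trace)) 0 b, ?_⟩
  rintro s ⟨hs, hΩ, hc⟩
  have hs0 : s 0 ∈ Set.Icc a b := hab _ (pos_of_covMat_posDef hV0.posSemidef hw hw0 hΩ)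
    (by linarith [remlLogLik_le_mul_log_sub_div hV hV0 hr hrV hw hw0 y hs hΩ])
  refine ⟨fun i => ?_, fun i => ?_⟩
  · rcases eq_or_ne i 0 with rfl | hi
    · simpa using hs0.1
    · simpa [hi] using hs i
  · rcases eq_or_ne i 0 with rfl | hi
    · simpa using hs0.2
    have htrace : 0 < (V i).trace :=
      (hV i).trace_nonneg.lt_of_ne (Ne.symm (((hV i).trace_eq_zero_iff).not.2 (hVne i hi)))
    have hAΩ : algebraMap ℝ _ (a * r) ≤ covMat V s :=
      (algebraMap_mono _ (by gcongr; exact hs0.1)).trans (algebraMap_mul_le_covMat hV hrV hs)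
    rw [Function.update_of_ne hi, le_div_iff₀ (by positivity)]
    have := mul_trace_le_of_le_remlLogLik hV hs hΩ (by positivity) hAΩ hc i
    linarith

end Reml

theorem superlevel_sets_compact_span_general (m n : ℕ)
    (V : Fin (m + 1) → Matrix (Fin n) (Fin n) ℝ)
    (hV : ∀ i, (V i).PosSemidef) (hV0 : (V 0).PosDef)
    (hVne : ∀ i, i ≠ 0 → V i ≠ 0) (y : Fin n → ℝ) (hy : y ∉ spanH V) (c : ℝ) :
    IsCompact {s : Fin (m + 1) → ℝ |
      (∀ i, 0 ≤ s i) ∧ (covMat V s).PosDef ∧ c ≤ remlLogLik V y s} := by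
  obtain ⟨a, ha, b, hsub⟩ := exists_remlSuperlevelSet_subset_Icc hV hV0 hVne hy c
  have hbox_posDef : ∀ s ∈ Set.Icc (Pi.single 0 a) b, (covMat V s).PosDef := fun s hs =>
    covMat_posDef hV hV0 (fun i => (Pi.single_nonneg.2 ha.le i).trans (hs.1 i))
      (ha.trans_le (by simpa using hs.1 0))
  have hS : remlSuperlevelSet V y c = Set.Icc (Pi.single 0 a) b ∩ remlLogLik V y ⁻¹' Set.Ici c :=
    Set.Subset.antisymm (fun s hs => ⟨hsub hs, hs.2.2⟩) fun s ⟨hbox, hc⟩ =>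
      ⟨fun i => (Pi.single_nonneg.2 ha.le i).trans (hbox.1 i), hbox_posDef s hbox, hc⟩
  have hcont : ContinuousOn (remlLogLik V y) (Set.Icc (Pi.single 0 a) b) := fun s hs =>
    (continuousAt_remlLogLik V y (hbox_posDef s hs).det_pos.ne').continuousWithinAt
  change IsCompact (remlSuperlevelSet V y c)
  rw [hS]
  exact isCompact_Icc.of_isClosed_subset
    (hcont.preimage_isClosed_of_isClosed isClosed_Icc isClosed_Ici) Set.inter_subset_left

/-- coerciveness under Assumption 2: `V 0` is positive definite, the
remaining `Vᵢ` are nonzero positive semidefinite, the span `ℋ` of their column spaces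
has dimension `q < n`, and `y ∉ ℋ`.  Then every super-level set of the REML
log-likelihood is compact. -/
theorem superlevel_sets_compact_span (m n : ℕ)
    (V : Fin (m + 1) → Matrix (Fin n) (Fin n) ℝ)
    (hV : ∀ i, (V i).PosSemidef) (hV0 : (V 0).PosDef)
    (hVne : ∀ i, i ≠ 0 → V i ≠ 0) (q : ℕ)
    (hq : Module.finrank ℝ (spanH V) = q)
    (hqn : q < n) (y : Fin n → ℝ) (hy : y ∉ spanH V) (c : ℝ) :
    IsCompact {s : Fin (m + 1) → ℝ |
      (∀ i, 0 ≤ s i) ∧ (covMat V s).PosDef ∧ c ≤ remlLogLik V y s} :=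
  superlevel_sets_compact_span_general m n V hV hV0 hVne y hy c
end

section
/- Let A and B be real n×n symmetric positive definite matrices, and let L be an invertible real n×n matrix with B = L·Lᵀ. Then Y = (Lᵀ)⁻¹·(Lᵀ A L)^{1/2}·L⁻¹, where (Lᵀ A L)^{1/2} is the (unique) positive semidefinite square root of the positive definite matrix Lᵀ A L, is positive definite and satisfies Y·B·Y = A. Moreover Y is the unique positive definite solution: if Z is positive definite and Z·B·Z = A, then Z = Y. -/
/-!
The congruence `Y ↦ Lᵀ Y L` is a bijection that preserves positive definiteness, and since
`B = L Lᵀ` it turns `Y B Y` into the square `(Lᵀ Y L)²`. Hence `Y B Y = A` with `Y` positive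
definite says exactly that `Lᵀ Y L` is a positive definite square root of `Lᵀ A L`, and that
square root is unique.
-/

open Matrix

namespace Matrix

variable {n : Type*} [Fintype n] [DecidableEq n]

theorem transpose_mul_mul_cancel_iff {R : Type*} [CommRing R] {L X Y : Matrix n n R}
    (hL : IsUnit L) : Lᵀ * X * L = Lᵀ * Y * L ↔ X = Y := by
  rw [hL.mul_left_inj, ((isUnit_transpose L).mpr hL).mul_right_inj]

theorem IsUnit.posDef_transpose_mul_mul_iff {L X : Matrix n n ℝ} (hL : IsUnit L) :
    (Lᵀ * X * L).PosDef ↔ X.PosDef := by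
  simpa only [star_eq_conjTranspose, conjTranspose_eq_transpose_of_trivial] using
    hL.posDef_star_left_conjugate_iff (x := X)

open scoped ComplexOrder

variable {𝕜 : Type*} [RCLike 𝕜]

theorem PosSemidef.posDef_of_posDef_mul_self {S : Matrix n n 𝕜} (hS : S.PosSemidef)
    (hSS : (S * S).PosDef) : S.PosDef :=
  hS.posDef_iff_isUnit.mpr (isUnit_of_mul_isUnit_left hSS.isUnit)

open scoped MatrixOrder in
theorem PosSemidef.eq_of_mul_self_eq {S T : Matrix n n 𝕜} (hS : S.PosSemidef)
    (hT : T.PosSemidef) (h : S * S = T * T) : S = T :=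
  (CFC.mul_self_eq_mul_self_iff S T hS.nonneg hT.nonneg).mp h

end Matrix

theorem riccati_unique_posDef_solution_general (n : ℕ) (A B L S : Matrix (Fin n) (Fin n) ℝ)
    (hA : A.PosDef) (hL : IsUnit L.det) (hBL : B = L * Lᵀ)
    (hS : S.PosSemidef) (hSsq : S * S = Lᵀ * A * L) :
    ((Lᵀ)⁻¹ * S * L⁻¹).PosDef ∧
    ((Lᵀ)⁻¹ * S * L⁻¹) * B * ((Lᵀ)⁻¹ * S * L⁻¹) = A ∧
    ∀ Z : Matrix (Fin n) (Fin n) ℝ, Z.PosDef → Z * B * Z = A →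
      Z = (Lᵀ)⁻¹ * S * L⁻¹ := by
  have hLu : IsUnit L := (isUnit_iff_isUnit_det L).mpr hL
  have congr_sq : ∀ Y, Lᵀ * (Y * B * Y) * L = (Lᵀ * Y * L) * (Lᵀ * Y * L) := by
    simp [hBL, Matrix.mul_assoc]
  have hSpos : S.PosDef :=
    hS.posDef_of_posDef_mul_self (hSsq ▸ hLu.posDef_transpose_mul_mul_iff.mpr hA)
  set Y := (Lᵀ)⁻¹ * S * L⁻¹
  have hY : Lᵀ * Y * L = S := by
    rw [Matrix.mul_assoc, nonsing_inv_mul_cancel_right (A := L) _ hL,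
      mul_nonsing_inv_cancel_left (A := Lᵀ) _ (by rwa [det_transpose])]
  refine ⟨hLu.posDef_transpose_mul_mul_iff.mp (hY ▸ hSpos), ?_, fun Z hZ hZA => ?_⟩
  · rw [← transpose_mul_mul_cancel_iff hLu, congr_sq, hY, hSsq]
  · have hZS : Lᵀ * Z * L = S :=
      (hLu.posDef_transpose_mul_mul_iff.mpr hZ).posSemidef.eq_of_mul_self_eq hS
        (by rw [← congr_sq, hZA, hSsq])
    rw [← transpose_mul_mul_cancel_iff hLu, hZS, hY]

/-- Riccati equation: for positive definite `A`, `B` with `B = L Lᵀ`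
(`L` invertible), and `S` the positive semidefinite square root of `Lᵀ A L`, the matrix
`Y = (Lᵀ)⁻¹ S L⁻¹` is the unique positive definite solution of `Y B Y = A`. -/
theorem riccati_unique_posDef_solution (n : ℕ) (A B L S : Matrix (Fin n) (Fin n) ℝ)
    (hA : A.PosDef) (hB : B.PosDef) (hL : IsUnit L.det) (hBL : B = L * Lᵀ)
    (hS : S.PosSemidef) (hSsq : S * S = Lᵀ * A * L) :
    ((Lᵀ)⁻¹ * S * L⁻¹).PosDef ∧
    ((Lᵀ)⁻¹ * S * L⁻¹) * B * ((Lᵀ)⁻¹ * S * L⁻¹) = A ∧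
    ∀ Z : Matrix (Fin n) (Fin n) ℝ, Z.PosDef → Z * B * Z = A →
      Z = (Lᵀ)⁻¹ * S * L⁻¹ :=
  riccati_unique_posDef_solution_general n A B L S hA hL hBL hS hSsq
end

section
/- Let Γ₁,…,Γ_m and Γ₁',…,Γ_m' be real d×d symmetric positive definite matrices and V₁,…,V_m be real n×n symmetric positive definite matrices. Set Ω = Σᵢ Γᵢ ⊗ Vᵢ and Ω' = Σᵢ Γᵢ' ⊗ Vᵢ (Kronecker products), so Ω is positive definite. Then Ω'·Ω⁻¹·Ω' ⪯ Σᵢ (Γᵢ'·Γᵢ⁻¹·Γᵢ') ⊗ Vᵢ in the Loewner order; that is, Σᵢ (Γᵢ'Γᵢ⁻¹Γᵢ') ⊗ Vᵢ − Ω'Ω⁻¹Ω' is positive semidefinite. -/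
/-!
Each block matrix `[[Γᵢ, Γᵢ'], [Γᵢ'ᴴ, Γᵢ'ᴴ Γᵢ⁻¹ Γᵢ']]` is positive semidefinite, its Schur
complement being zero. Tensoring with `Vᵢ ⪰ 0` and reindexing gives a positive semidefinite block
matrix with Kronecker-product blocks; summing over `i` yields `[[Ω, Ω'], [Ω'ᴴ, ∑ (Γᵢ'ᴴ Γᵢ⁻¹ Γᵢ') ⊗ Vᵢ]] ⪰ 0`,
and the Schur complement of the positive definite block `Ω` is the claimed difference.
-/

open Matrix
open scoped Kronecker ComplexOrder

namespace Matrix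

variable {𝕜 ι α : Type*} {l m n o p : Type*}

theorem fromBlocks_sum [AddCommMonoid α] (s : Finset ι) (A : ι → Matrix n l α)
    (B : ι → Matrix n m α) (C : ι → Matrix o l α) (D : ι → Matrix o m α) :
    fromBlocks (∑ i ∈ s, A i) (∑ i ∈ s, B i) (∑ i ∈ s, C i) (∑ i ∈ s, D i) =
      ∑ i ∈ s, fromBlocks (A i) (B i) (C i) (D i) := by
  ext (_ | _) (_ | _) <;> simp [sum_apply]

theorem fromBlocks_kronecker [Mul α] (A : Matrix n l α) (B : Matrix n m α) (C : Matrix o l α)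
    (D : Matrix o m α) (V : Matrix p p α) :
    fromBlocks (A ⊗ₖ V) (B ⊗ₖ V) (C ⊗ₖ V) (D ⊗ₖ V) =
      (fromBlocks A B C D ⊗ₖ V).submatrix (Equiv.sumProdDistrib n o p).symm
        (Equiv.sumProdDistrib l m p).symm := by
  ext (⟨_, _⟩ | ⟨_, _⟩) (⟨_, _⟩ | ⟨_, _⟩) <;> rfl

variable [RCLike 𝕜] [Fintype m] [DecidableEq m] [Fintype n] [Fintype p]

theorem posSemidef_fromBlocks_schur {A : Matrix m m 𝕜} (hA : A.PosDef) (B : Matrix m n 𝕜) :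
    (fromBlocks A B Bᴴ (Bᴴ * A⁻¹ * B)).PosSemidef := by
  have := hA.isUnit.invertible
  exact (PosDef.fromBlocks₁₁ B _ hA).mpr (by simpa using PosSemidef.zero)

theorem posSemidef_fromBlocks_schur_kronecker {A : Matrix m m 𝕜} (hA : A.PosDef)
    (B : Matrix m n 𝕜) {V : Matrix p p 𝕜} (hV : V.PosSemidef) :
    (fromBlocks (A ⊗ₖ V) (B ⊗ₖ V) (B ⊗ₖ V)ᴴ ((Bᴴ * A⁻¹ * B) ⊗ₖ V)).PosSemidef := by
  rw [conjTranspose_kronecker, hV.isHermitian.eq, fromBlocks_kronecker]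
  exact ((posSemidef_fromBlocks_schur hA B).kronecker hV).submatrix _

theorem posSemidef_sum_schur_kronecker_sub [Fintype ι] [DecidableEq p] {A : ι → Matrix m m 𝕜}
    (B : ι → Matrix m n 𝕜) {V : ι → Matrix p p 𝕜} (hA : ∀ i, (A i).PosDef)
    (hV : ∀ i, (V i).PosSemidef) (hΩ : (∑ i, A i ⊗ₖ V i).PosDef) :
    ((∑ i, ((B i)ᴴ * (A i)⁻¹ * B i) ⊗ₖ V i) -
      (∑ i, B i ⊗ₖ V i)ᴴ * (∑ i, A i ⊗ₖ V i)⁻¹ * (∑ i, B i ⊗ₖ V i)).PosSemidef := by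
  have := hΩ.isUnit.invertible
  rw [← PosDef.fromBlocks₁₁ _ _ hΩ, conjTranspose_sum, fromBlocks_sum]
  exact posSemidef_sum _ fun i _ => posSemidef_fromBlocks_schur_kronecker (hA i) (B i) (hV i)

end Matrix

/-- Kronecker-product majorization: for positive definite `Γᵢ`, `Γᵢ'`
(`d×d`) and `Vᵢ` (`n×n`), with `Ω = ∑ Γᵢ ⊗ Vᵢ` and `Ω' = ∑ Γᵢ' ⊗ Vᵢ`, one has
`Ω' Ω⁻¹ Ω' ⪯ ∑ (Γᵢ' Γᵢ⁻¹ Γᵢ') ⊗ Vᵢ` in the Loewner order. -/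
theorem kronecker_mm_majorization (m d n : ℕ)
    (Γ Γ' : Fin m → Matrix (Fin d) (Fin d) ℝ)
    (V : Fin m → Matrix (Fin n) (Fin n) ℝ)
    (hΓ : ∀ i, (Γ i).PosDef) (hΓ' : ∀ i, (Γ' i).PosDef)
    (hV : ∀ i, (V i).PosDef) :
    ((∑ i, (Γ' i * (Γ i)⁻¹ * Γ' i) ⊗ₖ V i) -
      (∑ i, Γ' i ⊗ₖ V i) * (∑ i, Γ i ⊗ₖ V i)⁻¹ * (∑ i, Γ' i ⊗ₖ V i)).PosSemidef := by
  rcases isEmpty_or_nonempty (Fin m) with hm | hm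
  · simpa using PosSemidef.zero
  have hΩ := posDef_sum Finset.univ_nonempty fun i _ => (hΓ i).kronecker (hV i)
  have key := posSemidef_sum_schur_kronecker_sub Γ' hΓ (fun i => (hV i).posSemidef) hΩ
  simpa only [conjTranspose_sum, conjTranspose_kronecker, (hΓ' _).isHermitian.eq,
    (hV _).isHermitian.eq] using key
end

section
/- Let V be a real n×n symmetric positive semidefinite matrix with strictly positive diagonal entries, and let Ω be a real nd×nd symmetric positive definite matrix (indexed by pairs in {1,…,d}×{1,…,n}). Then the d×d matrix M = (I_d ⊗ 1_n)ᵀ · [ (1_d 1_dᵀ ⊗ V) ⊙ Ω⁻¹ ] · (I_d ⊗ 1_n) is symmetric positive definite, where 1_k denotes the column vector of k ones, ⊗ the Kronecker product, and ⊙ the Hadamard (entrywise) product. -/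
open Matrix
open scoped Kronecker
open scoped Matrix

/-- The `nd × d` matrix `I_d ⊗ 1_n`, where `1_n` is the column vector of ones. -/
noncomputable def idKronOnes (d n : ℕ) : Matrix (Fin d × Fin n) (Fin d × Fin 1) ℝ :=
  (1 : Matrix (Fin d) (Fin d) ℝ) ⊗ₖ (Matrix.of fun (_ : Fin n) (_ : Fin 1) => (1 : ℝ))

/-- The all-ones `d × d` matrix `1_d 1_dᵀ`. -/
noncomputable def onesMat (d : ℕ) : Matrix (Fin d) (Fin d) ℝ :=
  Matrix.of fun _ _ => (1 : ℝ)

/-!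
The all-ones matrix is positive semidefinite, so `K = 1_d 1_dᵀ ⊗ V` is positive semidefinite
with diagonal entries `V_ii > 0`. Writing `Ω⁻¹ = (Ω⁻¹ - c I) + c I` with `Ω⁻¹ - c I ⪰ 0` for
some `c > 0`, the Schur product theorem makes `K ⊙ Ω⁻¹` the sum of a positive semidefinite
matrix and the positive diagonal matrix `c · diag K`, hence positive definite. Finally
`I_d ⊗ 1_n` has the left inverse `n⁻¹ (I_d ⊗ 1_n)ᵀ`, so the congruence by it preserves
definiteness.
-/

open scoped ComplexOrder

namespace Matrix

variable {ι 𝕜 : Type*} [Fintype ι] [DecidableEq ι] [RCLike 𝕜]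

open scoped MatrixOrder in
lemma PosDef.exists_pos_posSemidef_sub_smul_one {W : Matrix ι ι 𝕜} (hW : W.PosDef) :
    ∃ c : ℝ, 0 < c ∧ (W - c • (1 : Matrix ι ι 𝕜)).PosSemidef := by
  cases isEmpty_or_nonempty ι
  · exact ⟨1, one_pos, Subsingleton.elim 0 (W - _) ▸ .zero⟩
  obtain ⟨c, hc, hle⟩ := (CFC.exists_pos_algebraMap_le_iff hW.isHermitian.isSelfAdjoint).2
    fun x hx => hW.isStrictlyPositive.spectrum_pos hx
  refine ⟨c, hc, ?_⟩
  rw [← sub_nonneg] at hle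
  simpa [Algebra.algebraMap_eq_smul_one] using hle.posSemidef

lemma PosSemidef.hadamard_posDef {K W : Matrix ι ι 𝕜} (hK : K.PosSemidef)
    (hKdiag : ∀ i, 0 < K i i) (hW : W.PosDef) : (K ⊙ W).PosDef := by
  obtain ⟨c, hc, hWc⟩ := hW.exists_pos_posSemidef_sub_smul_one
  have hsplit : K ⊙ W = K ⊙ (W - c • 1) + diagonal (c • K.diag) := by
    conv_lhs => rw [← sub_add_cancel W (c • 1)]
    rw [hadamard_add, hadamard_smul, hadamard_one, diagonal_smul]
  rw [hsplit]
  refine PosDef.posSemidef_add (hK.hadamard hWc) (posDef_diagonal_iff.2 fun i => ?_)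
  simpa [RCLike.real_smul_eq_coe_mul] using mul_pos (RCLike.ofReal_pos.2 hc) (hKdiag i)

end Matrix

lemma onesMat_posSemidef (d : ℕ) : (onesMat d).PosSemidef := by
  simpa [vecMulVec, onesMat] using posSemidef_vecMulVec_self_star (1 : Fin d → ℝ)

lemma onesMat_kronecker_apply {n d : ℕ} (V : Matrix (Fin n) (Fin n) ℝ) (p q : Fin d × Fin n) :
    (onesMat d ⊗ₖ V) p q = V p.2 q.2 := by
  simp [onesMat]

lemma idKronOnes_transpose_mul_self (d n : ℕ) :
    (idKronOnes d n)ᵀ * idKronOnes d n = (n : ℝ) • 1 := by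
  ext ⟨a, i⟩ ⟨b, j⟩
  rcases eq_or_ne a b with rfl | hab
  · simp [idKronOnes, mul_apply, Fintype.sum_prod_type, one_apply, Fin.fin_one_eq_zero]
  · simp [idKronOnes, mul_apply, Fintype.sum_prod_type, one_apply, hab, hab.symm]

lemma mulVec_idKronOnes_injective {d n : ℕ} (hn : 0 < n) :
    Function.Injective (idKronOnes d n).mulVec := by
  refine Function.LeftInverse.injective (g := ((n : ℝ)⁻¹ • (idKronOnes d n)ᵀ).mulVec) fun y => ?_
  have hn' : (n : ℝ) ≠ 0 := by positivity
  rw [mulVec_mulVec, Matrix.smul_mul, idKronOnes_transpose_mul_self, smul_smul,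
    inv_mul_cancel₀ hn', one_smul, one_mulVec]

/-- the coefficient matrix
`M = (I_d ⊗ 1_n)ᵀ [ (1_d 1_dᵀ ⊗ V) ⊙ Ω⁻¹ ] (I_d ⊗ 1_n)` is positive definite whenever
`V` is positive semidefinite with strictly positive diagonal and `Ω` is positive
definite. -/
theorem coefficient_matrix_posDef (n d : ℕ) (hn : 0 < n)
    (V : Matrix (Fin n) (Fin n) ℝ) (hV : V.PosSemidef) (hVdiag : ∀ i, 0 < V i i)
    (Ω : Matrix (Fin d × Fin n) (Fin d × Fin n) ℝ) (hΩ : Ω.PosDef) :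
    ((idKronOnes d n)ᵀ * (((onesMat d) ⊗ₖ V) ⊙ Ω⁻¹) * idKronOnes d n).PosDef := by
  have hK : (onesMat d ⊗ₖ V).PosSemidef := (onesMat_posSemidef d).kronecker hV
  have hKdiag : ∀ p, 0 < (onesMat d ⊗ₖ V) p p := fun p =>
    (onesMat_kronecker_apply V p p).symm ▸ hVdiag p.2
  have hC : (onesMat d ⊗ₖ V ⊙ Ω⁻¹).PosDef := hK.hadamard_posDef hKdiag hΩ.inv
  rw [← conjTranspose_eq_transpose_of_trivial]
  exact hC.conjTranspose_mul_mul_same (mulVec_idKronOnes_injective hn)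
end

section
/- Let A and B be real n×n symmetric positive semidefinite matrices such that the range of the linear map x ↦ Ax equals the range of the linear map x ↦ Bx. Let P be a real n×n matrix satisfying the four Penrose equations for A (APA = A, PAP = P, (AP)ᵀ = AP, (PA)ᵀ = PA). Then lim_{ε → 0⁺} (B + εI)·(A + εI)⁻¹·(B + εI) = B·P·B; that is, the map ε ↦ (B + εI)(A + εI)⁻¹(B + εI), defined for ε > 0, tends to B A⁺ B as ε tends to 0 from the right. -/
/-!
`Q = A P` is the projection onto `range A = range B`, so `B Q = Q B = B`. For small `ε ≠ 0`,
`1 + ε P` is invertible and `(A + ε I)⁻¹ = P (1 + ε P)⁻¹ + ε⁻¹ (I - Q)`, and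
`(B + ε I)(I - Q)(B + ε I) = ε² (I - Q)` absorbs the singular factor `ε⁻¹`. Hence the regularized
product equals `(B + ε I) P (1 + ε P)⁻¹ (B + ε I) + ε (I - Q)`, which is continuous at `ε = 0`
with value `B P B`.
-/

open Matrix Filter Topology

namespace Matrix

variable {m : Type*} [Fintype m]

theorem IsSymm.commute_of_penrose {R : Type*} [CommRing R] {A P : Matrix m m R}
    (hA : A.IsSymm) (hP1 : A * P * A = A) (hP3 : (A * P)ᵀ = A * P)
    (hP4 : (P * A)ᵀ = P * A) : Commute A P := by
  have hAPt : A * Pᵀ = P * A := by simpa [transpose_mul, hA.eq] using hP4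
  have hPtA : Pᵀ * A = A * P := by simpa [transpose_mul, hA.eq] using hP3
  have hAPtA : A * Pᵀ * A = A := by
    simpa [transpose_mul, hA.eq, Matrix.mul_assoc] using congrArg (·ᵀ) hP1
  calc A * P = A * Pᵀ * A * P := by rw [hAPtA]
    _ = P * A * (A * P) := by rw [hAPt, Matrix.mul_assoc]
    _ = P * (A * Pᵀ * A) := by rw [← hPtA]; noncomm_ring
    _ = P * A := by rw [hAPtA]

theorem mul_mul_eq_of_range_le {R : Type*} [CommRing R] {k l : Type*} [Fintype k] [Fintype l]
    {A : Matrix m k R} {P : Matrix k m R} {B : Matrix m l R} (hP1 : A * P * A = A)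
    (h : LinearMap.range B.mulVecLin ≤ LinearMap.range A.mulVecLin) : A * P * B = B := by
  refine ext_iff_mulVec.mpr fun v => ?_
  obtain ⟨y, hy⟩ := h ⟨v, rfl⟩
  simp only [mulVecLin_apply] at hy
  rw [← mulVec_mulVec, ← hy, mulVec_mulVec, hP1]

theorem add_smul_one_mul_sub_mul_add_smul_one {R : Type*} [CommRing R] [DecidableEq m]
    {B Q : Matrix m m R} (hBQ : B * Q = B) (hQB : Q * B = B) (c : R) :
    (B + c • 1) * (1 - Q) * (B + c • 1) = (c * c) • (1 - Q) := by
  simp only [Matrix.add_mul, Matrix.mul_add, Matrix.mul_sub, Matrix.sub_mul, hBQ, hQB,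
    Matrix.mul_one, Matrix.one_mul, Matrix.smul_mul, Matrix.mul_smul, sub_self]
  module

theorem inv_add_smul_one_of_penrose {K : Type*} [Field K] [DecidableEq m] {A P : Matrix m m K}
    (hAP : Commute A P) (hP1 : A * P * A = A) (hP2 : P * A * P = P) {ε : K} (hε : ε ≠ 0)
    (hdet : IsUnit (1 + ε • P).det) :
    (A + ε • 1)⁻¹ = P * (1 + ε • P)⁻¹ + ε⁻¹ • (1 - A * P) := by
  refine inv_eq_right_inv ?_
  have hAPP : A * P * P = P := by rw [hAP.eq, hP2]
  have hAAP : A * (A * P) = A := by rw [hAP.eq, ← Matrix.mul_assoc, hP1]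
  have hfactor : (A + ε • 1) * P = A * P * (1 + ε • P) := by
    rw [Matrix.add_mul, Matrix.mul_add, Matrix.mul_smul, hAPP]; simp
  have hproj : (A + ε • 1) * (P * (1 + ε • P)⁻¹) = A * P := by
    rw [← Matrix.mul_assoc, hfactor, Matrix.mul_assoc, mul_nonsing_inv _ hdet, Matrix.mul_one]
  have hcompl : (A + ε • 1) * (1 - A * P) = ε • (1 - A * P) := by
    rw [Matrix.mul_sub, Matrix.add_mul, Matrix.add_mul, hAAP]; simp [smul_sub]
  rw [Matrix.mul_add, hproj, Matrix.mul_smul, hcompl, smul_smul, inv_mul_cancel₀ hε, one_smul]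
  abel

section Continuity

variable [DecidableEq m] {𝕜 : Type*} [NormedField 𝕜]

theorem eventually_isUnit_det_one_add_smul (P : Matrix m m 𝕜) :
    ∀ᶠ ε in 𝓝 (0 : 𝕜), IsUnit (1 + ε • P).det := by
  have hcont : Continuous fun ε : 𝕜 => (1 + ε • P).det := by fun_prop
  filter_upwards [hcont.continuousAt.eventually_ne (by simp : (1 + (0 : 𝕜) • P).det ≠ 0)]
    with ε hε using hε.isUnit

theorem continuousAt_inv_one_add_smul (P : Matrix m m 𝕜) :
    ContinuousAt (fun ε : 𝕜 => (1 + ε • P)⁻¹) 0 := by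
  refine (continuousAt_matrix_inv _ ?_).comp (f := fun ε : 𝕜 => 1 + ε • P) (by fun_prop)
  simp only [zero_smul, add_zero, det_one]
  rw [Ring.inverse_eq_inv']
  exact continuousAt_inv₀ one_ne_zero

end Continuity

end Matrix

/-- if `A` and `B` are positive semidefinite with the same range and
`P = A⁺` is the Moore–Penrose pseudoinverse of `A` (characterized by the four Penrose
equations), then `(B + εI)(A + εI)⁻¹(B + εI) → B A⁺ B` as `ε → 0⁺`. -/
theorem limit_eps_reg_eq_pinv (n : ℕ) (A B P : Matrix (Fin n) (Fin n) ℝ)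
    (hA : A.PosSemidef) (hB : B.PosSemidef)
    (hrange : LinearMap.range A.mulVecLin = LinearMap.range B.mulVecLin)
    (hP1 : A * P * A = A) (hP2 : P * A * P = P)
    (hP3 : (A * P)ᵀ = A * P) (hP4 : (P * A)ᵀ = P * A) :
    Filter.Tendsto
      (fun ε : ℝ => (B + ε • (1 : Matrix (Fin n) (Fin n) ℝ)) *
        (A + ε • (1 : Matrix (Fin n) (Fin n) ℝ))⁻¹ *
        (B + ε • (1 : Matrix (Fin n) (Fin n) ℝ)))
      (nhdsWithin 0 (Set.Ioi 0)) (nhds (B * P * B)) := by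
  have hAP : Commute A P :=
    (isHermitian_iff_isSymm.mp hA.isHermitian).commute_of_penrose hP1 hP3 hP4
  have hQB : A * P * B = B := mul_mul_eq_of_range_le hP1 hrange.ge
  have hBQ : B * (A * P) = B := by
    simpa [transpose_mul, hP3, (isHermitian_iff_isSymm.mp hB.isHermitian).eq]
      using congrArg (·ᵀ) hQB
  have hcont : ContinuousAt (fun ε : ℝ =>
      (B + ε • 1) * (P * (1 + ε • P)⁻¹) * (B + ε • 1) + ε • (1 - A * P)) 0 := by
    have := continuousAt_inv_one_add_smul P
    fun_prop
  have hlim := (hcont.continuousWithinAt (s := Set.Ioi 0)).tendsto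
  simp only [zero_smul, add_zero, inv_one, Matrix.mul_one] at hlim
  refine hlim.congr' ?_
  filter_upwards [self_mem_nhdsWithin,
    nhdsWithin_le_nhds (eventually_isUnit_det_one_add_smul P)] with ε hε hdet
  rw [eq_comm, inv_add_smul_one_of_penrose hAP hP1 hP2 hε.ne' hdet, Matrix.mul_add (B + ε • 1),
    Matrix.add_mul _ _ (B + ε • 1), Matrix.mul_smul, Matrix.smul_mul,
    add_smul_one_mul_sub_mul_add_smul_one hBQ hQB, smul_smul,
    inv_mul_cancel_left₀ hε.ne']
end
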